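/- R_Cfg is a bisimulation between the CES and CESH machines; consequently, for every related pair of configurations, the CES configuration terminates with a natural number value nat n if and only if the related CESH configuration terminates with nat n, and the CES configuration diverges if and only if the CESH configuration diverges. Moreover, for any code c, the initial configurations (c, [], []) and (c, [], [], ∅) are related by R_Cfg. -/

import Mathlib

mutual
inductive Instr : Type where
  | var : Nat → Instr
  | clos : Code → Instr
  | appl : Instr
  | lit : Nat → Instr
  | op : (Nat → Nat → Nat) → Instr
inductive Code : Type where
  | seq : Instr → Code → Code
  | cond : Code → Code → Code
  | END : Code
  | RET : Code
end

namespace CES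

inductive Value : Type where
  | nat : Nat → Value
  | clos : Code → List Value → Value

abbrev Env := List Value

inductive StackElem : Type where
  | val : Value → StackElem
  | cont : Code → Env → StackElem

abbrev Stack := List StackElem
abbrev Config := Code × Env × Stack

/-- The CES machine transition relation. -/
inductive Step : Config → Config → Prop where
  | var {n : Nat} {c : Code} {e : Env} {s : Stack} {v : Value} :
      e[n]? = some v →
      Step (.seq (.var n) c, e, s) (c, e, .val v :: s)
  | clos {c' c : Code} {e : Env} {s : Stack} :
      Step (.seq (.clos c') c, e, s) (c, e, .val (.clos c' e) :: s)
  | appl {c c' : Code} {e e' : Env} {v : Value} {s : Stack} :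
      Step (.seq .appl c, e, .val v :: .val (.clos c' e') :: s)
           (c', v :: e', .cont c e :: s)
  | ret {c : Code} {e e' : Env} {v : Value} {s : Stack} :
      Step (.RET, e, .val v :: .cont c e' :: s) (c, e', .val v :: s)
  | lit {n : Nat} {c : Code} {e : Env} {s : Stack} :
      Step (.seq (.lit n) c, e, s) (c, e, .val (.nat n) :: s)
  | op {f : Nat → Nat → Nat} {c : Code} {e : Env} {n₁ n₂ : Nat} {s : Stack} :
      Step (.seq (.op f) c, e, .val (.nat n₁) :: .val (.nat n₂) :: s)
           (c, e, .val (.nat (f n₁ n₂)) :: s)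
  | cond0 {c c' : Code} {e : Env} {s : Stack} :
      Step (.cond c c', e, .val (.nat 0) :: s) (c, e, s)
  | condS {c c' : Code} {e : Env} {n : Nat} {s : Stack} :
      Step (.cond c c', e, .val (.nat (n+1)) :: s) (c', e, s)

end CES

namespace CESH

abbrev Ptr : Type := Nat

inductive Value : Type where
  | nat : Nat → Value
  | clos : Ptr → Value

abbrev Env := List Value
abbrev Closure := Code × Env

inductive StackElem : Type where
  | val : Value → StackElem
  | cont : Closure → StackElem

abbrev Stack := List StackElem
abbrev Heap := List Closure
abbrev Config := Code × Env × Stack × Heap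

/-- The CESH machine transition relation, with a list-based heap. -/
inductive Step : Config → Config → Prop where
  | var {n : Nat} {c : Code} {e : Env} {s : Stack} {h : Heap} {v : Value} :
      e[n]? = some v →
      Step (.seq (.var n) c, e, s, h) (c, e, .val v :: s, h)
  | clos {c' c : Code} {e : Env} {s : Stack} {h : Heap} :
      Step (.seq (.clos c') c, e, s, h)
           (c, e, .val (.clos h.length) :: s, h ++ [(c', e)])
  | appl {c c' : Code} {e e' : Env} {v : Value} {ptr : Ptr} {s : Stack} {h : Heap} :
      h[ptr]? = some (c', e') →
      Step (.seq .appl c, e, .val v :: .val (.clos ptr) :: s, h)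
           (c', v :: e', .cont (c, e) :: s, h)
  | ret {c : Code} {e e' : Env} {v : Value} {s : Stack} {h : Heap} :
      Step (.RET, e, .val v :: .cont (c, e') :: s, h) (c, e', .val v :: s, h)
  | lit {n : Nat} {c : Code} {e : Env} {s : Stack} {h : Heap} :
      Step (.seq (.lit n) c, e, s, h) (c, e, .val (.nat n) :: s, h)
  | op {f : Nat → Nat → Nat} {c : Code} {e : Env} {n₁ n₂ : Nat} {s : Stack} {h : Heap} :
      Step (.seq (.op f) c, e, .val (.nat n₁) :: .val (.nat n₂) :: s, h)
           (c, e, .val (.nat (f n₁ n₂)) :: s, h)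
  | cond0 {c c' : Code} {e : Env} {s : Stack} {h : Heap} :
      Step (.cond c c', e, .val (.nat 0) :: s, h) (c, e, s, h)
  | condS {c c' : Code} {e : Env} {n : Nat} {s : Stack} {h : Heap} :
      Step (.cond c c', e, .val (.nat (n+1)) :: s, h) (c', e, s, h)

end CESH

mutual
/-- Relation between CES values and CESH values, parameterised by the CESH heap:
equal naturals are related, and a CES closure is related to a pointer that
dereferences to a componentwise-related CESH closure. -/
inductive RVal (h : CESH.Heap) : CES.Value → CESH.Value → Prop where
  | nat {n : Nat} : RVal h (.nat n) (.nat n)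
  | clos {c : Code} {e₁ : CES.Env} {e₂ : CESH.Env} {ptr : CESH.Ptr} :
      h[ptr]? = some (c, e₂) → REnv h e₁ e₂ → RVal h (.clos c e₁) (.clos ptr)
/-- Pointwise relation between CES and CESH environments. -/
inductive REnv (h : CESH.Heap) : CES.Env → CESH.Env → Prop where
  | nil : REnv h [] []
  | cons {v₁ : CES.Value} {e₁ : CES.Env} {v₂ : CESH.Value} {e₂ : CESH.Env} :
      RVal h v₁ v₂ → REnv h e₁ e₂ → REnv h (v₁ :: e₁) (v₂ :: e₂)
end

/-- Relation between CES closures and CESH closures: equal code, related environments. -/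
def RClos (h : CESH.Heap) (cl₁ : Code × CES.Env) (cl₂ : CESH.Closure) : Prop :=
  cl₁.1 = cl₂.1 ∧ REnv h cl₁.2 cl₂.2

/-- Relation between CES and CESH stack elements. -/
inductive RStackElem (h : CESH.Heap) : CES.StackElem → CESH.StackElem → Prop where
  | val {v₁ : CES.Value} {v₂ : CESH.Value} :
      RVal h v₁ v₂ → RStackElem h (.val v₁) (.val v₂)
  | cont {c : Code} {e₁ : CES.Env} {e₂ : CESH.Env} :
      REnv h e₁ e₂ → RStackElem h (.cont c e₁) (.cont (c, e₂))

/-- Pointwise relation between stacks. -/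
def RStack (h : CESH.Heap) : CES.Stack → CESH.Stack → Prop :=
  List.Forall₂ (RStackElem h)

/-- The relation between CES and CESH configurations. -/
def RCfg : CES.Config → CESH.Config → Prop :=
  fun cfg₁ cfg₂ =>
    match cfg₁, cfg₂ with
    | (c₁, e₁, s₁), (c₂, e₂, s₂, h) => c₁ = c₂ ∧ REnv h e₁ e₂ ∧ RStack h s₁ s₂

def Simulation {A B : Type*} (step : A → A → Prop) (step' : B → B → Prop)
    (R : A → B → Prop) : Prop :=
  ∀ a a' b, step a a' → R a b → ∃ b', step' b b' ∧ R a' b'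

/-- CES termination with the value `nat n`. -/
def DownCES (cfg : CES.Config) (n : Nat) : Prop :=
  Relation.ReflTransGen CES.Step cfg (Code.END, [], [CES.StackElem.val (.nat n)])

/-- CESH termination with the value `nat n` (with any final heap). -/
def DownCESH (cfg : CESH.Config) (n : Nat) : Prop :=
  ∃ h, Relation.ReflTransGen CESH.Step cfg (Code.END, [], [CESH.StackElem.val (.nat n)], h)

/-- Divergence: another step is possible from every reachable configuration. -/
def Diverges {A : Type*} (step : A → A → Prop) (a : A) : Prop :=
  ∀ b, Relation.ReflTransGen step a b → ∃ c, step b c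

/-!
CES keeps closures inline while CESH allocates them in a heap that only grows by appending,
so `RVal h` relates a CES closure to any pointer that dereferences to a related closure, and
the relation survives heap extension. With this, each CES rule is matched by the CESH rule
of the same name on related configurations and vice versa, so both `RCfg` and its inverse
are simulations. Terminal configurations are related only to terminal ones, which transports
termination with `nat n`; for divergence, every configuration reachable on one side is
related to one reachable on the other, and related configurations step together.
-/

open Relation

section Simulation

variable {A B : Type*} {step : A → A → Prop} {step' : B → B → Prop} {R : A → B → Prop}

theorem Simulation.reflTransGen (hs : Simulation step step' R) {a a' : A} {b : B}
    (hsteps : ReflTransGen step a a') (hab : R a b) :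
    ∃ b', ReflTransGen step' b b' ∧ R a' b' := by
  induction hsteps with
  | refl => exact ⟨b, .refl, hab⟩
  | tail _ hstep ih =>
    obtain ⟨b', hb', hR'⟩ := ih
    obtain ⟨b'', hb'', hR''⟩ := hs _ _ _ hstep hR'
    exact ⟨b'', hb'.tail hb'', hR''⟩

theorem Simulation.diverges (hs : Simulation step step' R) (hs' : Simulation step' step (flip R))
    {a : A} {b : B} (hab : R a b) (ha : Diverges step a) : Diverges step' b := by
  intro b' hb'
  obtain ⟨a', ha', hR⟩ := hs'.reflTransGen hb' hab
  obtain ⟨a'', hstep⟩ := ha a' ha'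
  obtain ⟨b'', hstep', -⟩ := hs _ _ _ hstep hR
  exact ⟨b'', hstep'⟩

theorem Simulation.diverges_iff (hs : Simulation step step' R)
    (hs' : Simulation step' step (flip R)) {a : A} {b : B} (hab : R a b) :
    Diverges step a ↔ Diverges step' b :=
  ⟨hs.diverges hs' hab, hs'.diverges hs hab⟩

end Simulation

theorem List.getElem?_append_of_getElem?_eq_some {α : Type*} {l l' : List α} {n : Nat} {a : α}
    (hl : l[n]? = some a) : (l ++ l')[n]? = some a := by
  rw [List.getElem?_append_left (List.getElem?_eq_some_iff.1 hl).1, hl]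

section HeapExtension

variable {h h' : CESH.Heap}

mutual
theorem RVal.append_heap : ∀ {v₁ v₂}, RVal h v₁ v₂ → RVal (h ++ h') v₁ v₂
  | _, _, .nat => .nat
  | _, _, .clos hget henv =>
    .clos (List.getElem?_append_of_getElem?_eq_some hget) henv.append_heap
theorem REnv.append_heap : ∀ {e₁ e₂}, REnv h e₁ e₂ → REnv (h ++ h') e₁ e₂
  | _, _, .nil => .nil
  | _, _, .cons hv he => .cons hv.append_heap he.append_heap
end

theorem RStack.append_heap {s₁ s₂} (hs : RStack h s₁ s₂) : RStack (h ++ h') s₁ s₂ :=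
  hs.imp fun
    | _, _, .val hv => .val hv.append_heap
    | _, _, .cont he => .cont he.append_heap

end HeapExtension

namespace REnv

variable {h : CESH.Heap}

theorem getElem?_left {e₁ e₂} (he : REnv h e₁ e₂) {n : Nat} {v₁} (hv₁ : e₁[n]? = some v₁) :
    ∃ v₂, e₂[n]? = some v₂ ∧ RVal h v₁ v₂ := by
  induction n generalizing e₁ e₂ with
  | zero => cases he with
    | nil => simp at hv₁
    | cons hv _ => cases hv₁; exact ⟨_, rfl, hv⟩
  | succ n ih => cases he with
    | nil => simp at hv₁
    | cons _ he => exact ih he hv₁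

theorem getElem?_right {e₁ e₂} (he : REnv h e₁ e₂) {n : Nat} {v₂} (hv₂ : e₂[n]? = some v₂) :
    ∃ v₁, e₁[n]? = some v₁ ∧ RVal h v₁ v₂ := by
  induction n generalizing e₁ e₂ with
  | zero => cases he with
    | nil => simp at hv₂
    | cons hv _ => cases hv₂; exact ⟨_, rfl, hv⟩
  | succ n ih => cases he with
    | nil => simp at hv₂
    | cons _ he => exact ih he hv₂

end REnv

theorem RCfg_simulation : Simulation CES.Step CESH.Step RCfg := by
  rintro ⟨c, e₁, s₁⟩ cfg₁' ⟨_, e₂, s₂, h⟩ hstep ⟨rfl, henv, hstk⟩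
  cases hstep with
  | var hget =>
    obtain ⟨v₂, hget₂, hv⟩ := henv.getElem?_left hget
    exact ⟨_, .var hget₂, rfl, henv, .cons (.val hv) hstk⟩
  | clos =>
    exact ⟨_, .clos, rfl, henv.append_heap,
      .cons (.val (.clos List.getElem?_concat_length henv.append_heap)) hstk.append_heap⟩
  | appl =>
    obtain _ | ⟨⟨hv⟩, _ | ⟨⟨_ | ⟨hget, henv'⟩⟩, hstk⟩⟩ := hstk
    exact ⟨_, .appl hget, rfl, .cons hv henv', .cons (.cont henv) hstk⟩
  | ret =>
    obtain _ | ⟨⟨hv⟩, _ | ⟨_ | henv', hstk⟩⟩ := hstk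
    exact ⟨_, .ret, rfl, henv', .cons (.val hv) hstk⟩
  | lit => exact ⟨_, .lit, rfl, henv, .cons (.val .nat) hstk⟩
  | op =>
    obtain _ | ⟨⟨⟨⟩⟩, _ | ⟨⟨⟨⟩⟩, hstk⟩⟩ := hstk
    exact ⟨_, .op, rfl, henv, .cons (.val .nat) hstk⟩
  | cond0 =>
    obtain _ | ⟨⟨⟨⟩⟩, hstk⟩ := hstk
    exact ⟨_, .cond0, rfl, henv, hstk⟩
  | condS =>
    obtain _ | ⟨⟨⟨⟩⟩, hstk⟩ := hstk
    exact ⟨_, .condS, rfl, henv, hstk⟩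

theorem RCfg_flip_simulation : Simulation CESH.Step CES.Step (flip RCfg) := by
  rintro ⟨c, e₂, s₂, h⟩ cfg₂' ⟨_, e₁, s₁⟩ hstep ⟨rfl, henv, hstk⟩
  cases hstep with
  | var hget =>
    obtain ⟨v₁, hget₁, hv⟩ := henv.getElem?_right hget
    exact ⟨_, .var hget₁, rfl, henv, .cons (.val hv) hstk⟩
  | clos =>
    exact ⟨_, .clos, rfl, henv.append_heap,
      .cons (.val (.clos List.getElem?_concat_length henv.append_heap)) hstk.append_heap⟩
  | appl hget =>
    obtain _ | ⟨⟨hv⟩, _ | ⟨⟨_ | ⟨hget', henv'⟩⟩, hstk⟩⟩ := hstk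
    cases hget'.symm.trans hget
    exact ⟨_, .appl, rfl, .cons hv henv', .cons (.cont henv) hstk⟩
  | ret =>
    obtain _ | ⟨⟨hv⟩, _ | ⟨_ | henv', hstk⟩⟩ := hstk
    exact ⟨_, .ret, rfl, henv', .cons (.val hv) hstk⟩
  | lit => exact ⟨_, .lit, rfl, henv, .cons (.val .nat) hstk⟩
  | op =>
    obtain _ | ⟨⟨⟨⟩⟩, _ | ⟨⟨⟨⟩⟩, hstk⟩⟩ := hstk
    exact ⟨_, .op, rfl, henv, .cons (.val .nat) hstk⟩
  | cond0 =>
    obtain _ | ⟨⟨⟨⟩⟩, hstk⟩ := hstk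
    exact ⟨_, .cond0, rfl, henv, hstk⟩
  | condS =>
    obtain _ | ⟨⟨⟨⟩⟩, hstk⟩ := hstk
    exact ⟨_, .condS, rfl, henv, hstk⟩

theorem RCfg_final_left {n : Nat} {cfg₂ : CESH.Config}
    (hR : RCfg (.END, [], [.val (.nat n)]) cfg₂) :
    ∃ h, cfg₂ = (.END, [], [.val (.nat n)], h) := by
  obtain ⟨_, _, _, h⟩ := cfg₂
  obtain ⟨rfl, ⟨⟩, _ | ⟨⟨⟨⟩⟩, ⟨⟩⟩⟩ := hR
  exact ⟨h, rfl⟩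

theorem RCfg_final_right {n : Nat} {cfg₁ : CES.Config} {h : CESH.Heap}
    (hR : RCfg cfg₁ (.END, [], [.val (.nat n)], h)) :
    cfg₁ = (.END, [], [.val (.nat n)]) := by
  obtain ⟨_, _, _⟩ := cfg₁
  obtain ⟨rfl, ⟨⟩, _ | ⟨⟨⟨⟩⟩, ⟨⟩⟩⟩ := hR
  rfl

theorem RCfg_downCES_iff_downCESH {cfg₁ : CES.Config} {cfg₂ : CESH.Config} (n : Nat)
    (hR : RCfg cfg₁ cfg₂) : DownCES cfg₁ n ↔ DownCESH cfg₂ n := by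
  constructor
  · intro hdown
    obtain ⟨_, hsteps, hfinal⟩ := RCfg_simulation.reflTransGen hdown hR
    obtain ⟨h, rfl⟩ := RCfg_final_left hfinal
    exact ⟨h, hsteps⟩
  · rintro ⟨h, hdown⟩
    obtain ⟨_, hsteps, hfinal⟩ := RCfg_flip_simulation.reflTransGen hdown hR
    rwa [RCfg_final_right hfinal] at hsteps

/-- `RCfg` is a bisimulation between the CES and CESH machines; consequently
related configurations agree on termination with natural number values and on
divergence; moreover initial configurations are related (∅ = [] is the empty heap). -/
theorem RCfg_bisimulation :
    (Simulation CES.Step CESH.Step RCfg ∧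
     Simulation CESH.Step CES.Step (fun cfg₂ cfg₁ => RCfg cfg₁ cfg₂)) ∧
    (∀ (cfg₁ : CES.Config) (cfg₂ : CESH.Config) (n : Nat), RCfg cfg₁ cfg₂ →
      (DownCES cfg₁ n ↔ DownCESH cfg₂ n)) ∧
    (∀ (cfg₁ : CES.Config) (cfg₂ : CESH.Config), RCfg cfg₁ cfg₂ →
      (Diverges CES.Step cfg₁ ↔ Diverges CESH.Step cfg₂)) ∧
    (∀ c : Code, RCfg (c, [], []) (c, [], [], [])) :=
  ⟨⟨RCfg_simulation, RCfg_flip_simulation⟩,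
    fun _ _ n hR => RCfg_downCES_iff_downCESH n hR,
    fun _ _ hR => RCfg_simulation.diverges_iff RCfg_flip_simulation hR,
    fun _ => ⟨rfl, .nil, .nil⟩⟩
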